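/- Let r ≥ 1 and let C₁ ⊆ F_q^{I₁}, C₂ ⊆ F_q^{I₂} be codes with |I₁ ∩ I₂| = m_r = (q^r−1)/(q−1), such that for i = 1,2 the projection C_i|_{I₁∩I₂} equals a fixed [m_r, r] simplex code Δ_r and the cross-section (C_i)_{I₁∩I₂} = {0}. Then the r-sum C₁ ⊕_r C₂ := S(C₁,C₂) satisfies dim(C₁ ⊕_r C₂) = dim(C₁) + dim(C₂) − r. -/
import Mathlib


open Module

/-- The submodule of functions in `α → F` vanishing on `s`. -/
def vanishOn (F : Type*) [Field F] {α : Type*} (s : Set α) : Submodule F (α → F) where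
  carrier := {x | ∀ a ∈ s, x a = 0}
  add_mem' := by
    intro x y hx hy a ha
    show x a + y a = 0
    rw [hx a ha, hy a ha, add_zero]
  zero_mem' := fun a _ => rfl
  smul_mem' := by
    intro c x hx a ha
    show c • x a = 0
    rw [hx a ha, smul_zero]

variable (F : Type*) [Field F] (J K Jb : Type*)

/-- The `⋆` operation: indices of the first code are `J ⊕ K`, of the second `K ⊕ Jb`,
where `K` plays the role of the common index set `I₁ ∩ I₂`.  On `J` the result agrees with
`x`, on `Jb` with `y`, and on the common part `K` it is `x − y`. -/
noncomputable def starMap :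
    ((J ⊕ K → F) × (K ⊕ Jb → F)) →ₗ[F] (J ⊕ K ⊕ Jb → F) where
  toFun p := Sum.elim (fun j => p.1 (Sum.inl j))
    (Sum.elim (fun k => p.1 (Sum.inr k) - p.2 (Sum.inl k)) (fun j => p.2 (Sum.inr j)))
  map_add' p q := by
    funext i
    rcases i with j | k | j <;> simp <;> ring
  map_smul' c p := by
    funext i
    rcases i with j | k | j <;> simp <;> ring

variable {F J K Jb}

/-- The code `C₁ ⋆ C₂ = {x ⋆ y : x ∈ C₁, y ∈ C₂}`. -/
noncomputable def starCode (C₁ : Submodule F (J ⊕ K → F)) (C₂ : Submodule F (K ⊕ Jb → F)) :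
    Submodule F (J ⊕ K ⊕ Jb → F) :=
  (C₁.prod C₂).map (starMap F J K Jb)

/-- The projection `C₁^{(p)} = C₁|_{I₁ ∩ I₂}` of the first code onto the common part `K`. -/
noncomputable def projK₁ (C₁ : Submodule F (J ⊕ K → F)) : Submodule F (K → F) :=
  C₁.map (LinearMap.funLeft F F (Sum.inr : K → J ⊕ K))

/-- The projection `C₂^{(p)} = C₂|_{I₁ ∩ I₂}` of the second code onto the common part `K`. -/
noncomputable def projK₂ (C₂ : Submodule F (K ⊕ Jb → F)) : Submodule F (K → F) :=
  C₂.map (LinearMap.funLeft F F (Sum.inl : K → K ⊕ Jb))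

/-- The cross-section `C₁^{(s)} = (C₁)_{I₁ ∩ I₂}` on the common part `K`. -/
noncomputable def crossK₁ (C₁ : Submodule F (J ⊕ K → F)) : Submodule F (K → F) :=
  (C₁ ⊓ vanishOn F (Set.range (Sum.inl : J → J ⊕ K))).map
    (LinearMap.funLeft F F (Sum.inr : K → J ⊕ K))

/-- The cross-section `C₂^{(s)} = (C₂)_{I₁ ∩ I₂}` on the common part `K`. -/
noncomputable def crossK₂ (C₂ : Submodule F (K ⊕ Jb → F)) : Submodule F (K → F) :=
  (C₂ ⊓ vanishOn F (Set.range (Sum.inr : Jb → K ⊕ Jb))).map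
    (LinearMap.funLeft F F (Sum.inl : K → K ⊕ Jb))

/-- `S(C₁, C₂)`: the cross-section of `C₁ ⋆ C₂` on the symmetric difference
`I₁ Δ I₂ = J ⊕ Jb`. -/
noncomputable def sCode (C₁ : Submodule F (J ⊕ K → F)) (C₂ : Submodule F (K ⊕ Jb → F)) :
    Submodule F (J ⊕ Jb → F) :=
  (starCode C₁ C₂ ⊓ vanishOn F (Set.range (fun k : K => (Sum.inr (Sum.inl k) : J ⊕ K ⊕ Jb)))).map
    (LinearMap.funLeft F F (Sum.elim Sum.inl (Sum.inr ∘ Sum.inr) : J ⊕ Jb → J ⊕ K ⊕ Jb))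

set_option synthInstance.maxHeartbeats 1000000 in
/-- if the common part `K` has cardinality `m_r = (q^r−1)/(q−1)`, both
projections onto `K` equal the simplex code `Δ_r` (the row space of a matrix `D` with `r`
linearly independent rows and pairwise linearly independent columns), and both
cross-sections on `K` are trivial, then the `r`-sum `C₁ ⊕_r C₂ = S(C₁,C₂)` satisfies
`dim (C₁ ⊕_r C₂) = dim C₁ + dim C₂ − r`. -/
theorem rSum_finrank [Fintype J] [Fintype K] [Fintype Jb] [Fintype F]
    (r : ℕ) (hr : 1 ≤ r)
    (hK : Fintype.card K = (Fintype.card F ^ r - 1) / (Fintype.card F - 1))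
    (D : Fin r → K → F)
    (hDrows : LinearIndependent F D)
    (hDcols : ∀ k₁ k₂ : K, k₁ ≠ k₂ →
      LinearIndependent F ![fun i => D i k₁, fun i => D i k₂])
    (C₁ : Submodule F (J ⊕ K → F)) (C₂ : Submodule F (K ⊕ Jb → F))
    (hp₁ : projK₁ C₁ = Submodule.span F (Set.range D))
    (hp₂ : projK₂ C₂ = Submodule.span F (Set.range D))
    (hs₁ : crossK₁ C₁ = ⊥) (hs₂ : crossK₂ C₂ = ⊥) :
    finrank F ↥(sCode C₁ C₂) = finrank F ↥C₁ + finrank F ↥C₂ - r := by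
  classical
  -- the "difference on K" map and the "outer restriction" map
  let L : ((J ⊕ K → F) × (K ⊕ Jb → F)) →ₗ[F] (K → F) :=
    { toFun := fun p k => p.1 (Sum.inr k) - p.2 (Sum.inl k)
      map_add' := by intro p q; funext k; simp; ring
      map_smul' := by intro c p; funext k; simp; ring }
  let f : ((J ⊕ K → F) × (K ⊕ Jb → F)) →ₗ[F] (J ⊕ Jb → F) :=
    { toFun := fun p => Sum.elim (fun j => p.1 (Sum.inl j)) (fun j => p.2 (Sum.inr j))
      map_add' := by intro p q; funext i; rcases i with j | j <;> simp
      map_smul' := by intro c p; funext i; rcases i with j | j <;> simp }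
  let M : Submodule F ((J ⊕ K → F) × (K ⊕ Jb → F)) := C₁.prod C₂
  let h : ↥M →ₗ[F] (K → F) := L.comp M.subtype
  let g : ↥(LinearMap.ker h) →ₗ[F] (J ⊕ Jb → F) :=
    (f.comp M.subtype).comp (LinearMap.ker h).subtype
  -- range of h is the simplex code, of dimension r
  have hrange_h : LinearMap.range h = Submodule.span F (Set.range D) := by
    apply le_antisymm
    · rintro x ⟨⟨⟨a, b⟩, hab⟩, rfl⟩
      obtain ⟨ha, hb⟩ := hab
      have h1 : (fun k => a (Sum.inr k)) ∈ Submodule.span F (Set.range D) := by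
        rw [← hp₁]; exact ⟨a, ha, rfl⟩
      have h2 : (fun k => b (Sum.inl k)) ∈ Submodule.span F (Set.range D) := by
        rw [← hp₂]; exact ⟨b, hb, rfl⟩
      have : (h ⟨(a, b), ha, hb⟩ : K → F)
          = (fun k => a (Sum.inr k)) - (fun k => b (Sum.inl k)) := rfl
      rw [this]
      exact sub_mem h1 h2
    · rw [← hp₁]
      rintro x ⟨a, ha, rfl⟩
      refine ⟨⟨(a, 0), ha, zero_mem _⟩, ?_⟩
      funext k
      show a (Sum.inr k) - (0 : K ⊕ Jb → F) (Sum.inl k) = a (Sum.inr k)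
      simp
  -- g is injective
  have hker_g : LinearMap.ker g = ⊥ := by
    rw [eq_bot_iff]
    rintro ⟨⟨⟨a, b⟩, ha, hb⟩, hab⟩ hv
    have hgv : Sum.elim (fun j => a (Sum.inl j)) (fun j => b (Sum.inr j)) = (0 : J ⊕ Jb → F) :=
      hv
    have haJ : ∀ j : J, a (Sum.inl j) = 0 := fun j => congrFun hgv (Sum.inl j)
    have hbJb : ∀ j : Jb, b (Sum.inr j) = 0 := fun j => congrFun hgv (Sum.inr j)
    have hdiff : ∀ k : K, a (Sum.inr k) - b (Sum.inl k) = 0 := by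
      intro k
      have : (h ⟨(a, b), ha, hb⟩ : K → F) = 0 := hab
      exact congrFun this k
    -- a restricted to K lies in the trivial cross-section
    have haK : (fun k => a (Sum.inr k)) ∈ crossK₁ C₁ := by
      refine ⟨a, ⟨ha, ?_⟩, rfl⟩
      rintro _ ⟨j, rfl⟩
      exact haJ j
    rw [hs₁] at haK
    have haK' : ∀ k : K, a (Sum.inr k) = 0 := fun k => congrFun haK k
    have ha0 : a = 0 := by
      funext i; rcases i with j | k
      · exact haJ j
      · exact haK' k
    have hb0 : b = 0 := by
      funext i; rcases i with k | j
      · have h1 := hdiff k; rw [haK' k, zero_sub, neg_eq_zero] at h1; exact h1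
      · exact hbJb j
    rw [Submodule.mem_bot]
    exact Subtype.ext (Subtype.ext (Prod.ext ha0 hb0))
  -- range of g is the sCode
  have hrange_g : LinearMap.range g = sCode C₁ C₂ := by
    apply le_antisymm
    · rintro _ ⟨⟨⟨⟨a, b⟩, ha, hb⟩, hab⟩, rfl⟩
      have hdiff : ∀ k : K, a (Sum.inr k) - b (Sum.inl k) = 0 := by
        intro k
        have : (h ⟨(a, b), ha, hb⟩ : K → F) = 0 := hab
        exact congrFun this k
      refine ⟨starMap F J K Jb (a, b), ⟨⟨(a, b), ⟨ha, hb⟩, rfl⟩, ?_⟩, ?_⟩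
      · rintro _ ⟨k, rfl⟩
        exact hdiff k
      · funext i
        rcases i with j | j <;> rfl
    · rintro _ ⟨w, ⟨⟨⟨a, b⟩, ⟨ha, hb⟩, rfl⟩, hvan⟩, rfl⟩
      have hdiff : ∀ k : K, a (Sum.inr k) - b (Sum.inl k) = 0 := by
        intro k
        exact hvan (Sum.inr (Sum.inl k)) ⟨k, rfl⟩
      refine ⟨⟨⟨(a, b), ha, hb⟩, ?_⟩, ?_⟩
      · show (h ⟨(a, b), ha, hb⟩ : K → F) = 0
        funext k
        exact hdiff k
      · funext i
        rcases i with j | j <;> rfl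
  -- finite dimensionality
  have : FiniteDimensional F ((J ⊕ K → F) × (K ⊕ Jb → F)) := by infer_instance
  -- dim M = dim C₁ + dim C₂
  have hdimM : finrank F ↥M = finrank F ↥C₁ + finrank F ↥C₂ := by
    have e : ↥M ≃ₗ[F] ↥C₁ × ↥C₂ :=
      { toFun := fun p => (⟨p.1.1, p.2.1⟩, ⟨p.1.2, p.2.2⟩)
        invFun := fun p => ⟨(p.1.1, p.2.1), p.1.2, p.2.2⟩
        left_inv := fun _ => rfl
        right_inv := fun _ => rfl
        map_add' := fun _ _ => rfl
        map_smul' := fun _ _ => rfl }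
    rw [e.finrank_eq, Module.finrank_prod]
  clear_value g h M f L
  -- dim (range h) = r
  have hdim_range_h : finrank F ↥(LinearMap.range h) = r := by
    rw [hrange_h, finrank_span_eq_card hDrows, Fintype.card_fin]
  -- rank-nullity for h
  have hrn_h := LinearMap.finrank_range_add_finrank_ker h
  -- rank-nullity for g
  haveI : FiniteDimensional F ↥M := inferInstance
  haveI : FiniteDimensional F ↥(LinearMap.ker h) := inferInstance
  have hrn_g := LinearMap.finrank_range_add_finrank_ker (K := F) (V := ↥(LinearMap.ker h)) (V₂ := J ⊕ Jb → F) g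
  rw [hker_g, finrank_bot F ↥(LinearMap.ker h), add_zero, hrange_g] at hrn_g
  rw [hdim_range_h, hdimM] at hrn_h
  -- conclude
  omega
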